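/- Let n ≥ 1 and let H be any finite dispersable bipartite graph with at least one edge (H is bipartite and mbt(H) = Δ(H) ≥ 1). Then S_n +_Q H is dispersable: mbt(S_n +_Q H) = Δ(S_n +_Q H) = n + Δ(H). -/

import Mathlib

open SimpleGraph

/-- Degree of a vertex. -/
noncomputable def deg {V : Type*} (G : SimpleGraph V) (v : V) : ℕ :=
  (G.neighborSet v).ncard

/-- Maximum degree Δ(G) of a finite simple graph. -/
noncomputable def maxDeg {V : Type*} [Fintype V] (G : SimpleGraph V) : ℕ :=
  Finset.univ.sup (deg G)

/-- `IsMBE G k f page` : the linear order on vertices given by the injection `f : V → ℕ`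
together with the page assignment `page` is a matching book embedding of `G` on `k` pages:
every edge gets a page `< k`, no two edges on a common page cross, and every vertex is
incident to at most one edge on each page. -/
def IsMBE {V : Type*} (G : SimpleGraph V) (k : ℕ) (f : V → ℕ) (page : Sym2 V → ℕ) : Prop :=
  Function.Injective f ∧
  (∀ u v, G.Adj u v → page s(u, v) < k) ∧
  (∀ u v x y, G.Adj u v → G.Adj x y → page s(u, v) = page s(x, y) →
    ¬(f u < f x ∧ f x < f v ∧ f v < f y)) ∧
  (∀ u v w, G.Adj u v → G.Adj u w → v ≠ w → page s(u, v) ≠ page s(u, w))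

/-- The matching book thickness of `G`: the least number of pages admitting a
matching book embedding. -/
noncomputable def mbt {V : Type*} (G : SimpleGraph V) : ℕ :=
  sInf {k | ∃ f page, IsMBE G k f page}

/-- A graph is outerplanar iff it has a one-page book embedding: a linear order of
its vertices (an injection into `ℕ`) in which no two edges cross. -/
def IsOuterplanar {V : Type*} (G : SimpleGraph V) : Prop :=
  ∃ f : V → ℕ, Function.Injective f ∧
    ∀ u v x y, G.Adj u v → G.Adj x y → ¬(f u < f x ∧ f x < f v ∧ f v < f y)

/-- The derived graph of `G` on vertex set `V(G) ⊕ E(G)`. Black–white edges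
(`u`–`(uv)` for `u` an endpoint of the edge `uv`) are always present; `black` indicates
whether the original edges of `G` are retained, and `white` indicates whether two edge
vertices corresponding to adjacent edges of `G` (distinct edges sharing an endpoint)
are joined. -/
def derivedG {V : Type*} (G : SimpleGraph V) (black white : Bool) :
    SimpleGraph (V ⊕ G.edgeSet) where
  Adj x y :=
    match x, y with
    | Sum.inl u, Sum.inl v => black = true ∧ G.Adj u v
    | Sum.inl u, Sum.inr e => u ∈ (e : Sym2 V)
    | Sum.inr e, Sum.inl u => u ∈ (e : Sym2 V)
    | Sum.inr e, Sum.inr f =>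
        white = true ∧ e ≠ f ∧ ∃ w, w ∈ (e : Sym2 V) ∧ w ∈ (f : Sym2 V)
  symm := by
    refine ⟨?_⟩
    rintro (u | e) (v | f) h
    · exact ⟨h.1, h.2.symm⟩
    · exact h
    · exact h
    · obtain ⟨hw, hne, w, h1, h2⟩ := h
      exact ⟨hw, hne.symm, w, h2, h1⟩
  loopless := by
    refine ⟨?_⟩
    rintro (u | e) h
    · exact G.irrefl h.2
    · exact h.2.1 rfl

/-- The four graph operations `S`, `R`, `Q`, `T`. -/
inductive FOp : Type
  | S | R | Q | T
  deriving DecidableEq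

/-- Whether the operation retains the original (black–black) edges of `G`. -/
def FOp.black : FOp → Bool
  | .R => true
  | .T => true
  | _ => false

/-- Whether the operation joins edge (white) vertices of adjacent edges. -/
def FOp.white : FOp → Bool
  | .Q => true
  | .T => true
  | _ => false

/-- `FGraph F G` is the graph `F(G)` for `F ∈ {S, R, Q, T}`. -/
def FGraph (F : FOp) {V : Type*} (G : SimpleGraph V) : SimpleGraph (V ⊕ G.edgeSet) :=
  derivedG G F.black F.white

/-- The `F`-sum `G +_F H`: vertex set `(V(G) ∪ E(G)) × V(H)`; `(u₁, u₂)` and `(v₁, v₂)`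
are adjacent iff `u₁ = v₁ ∈ V(G)` and `u₂v₂ ∈ E(H)`, or `u₂ = v₂` and
`u₁v₁ ∈ E(F(G))`. -/
def FSum (F : FOp) {V W : Type*} (G : SimpleGraph V) (H : SimpleGraph W) :
    SimpleGraph ((V ⊕ G.edgeSet) × W) where
  Adj x y :=
    (x.1 = y.1 ∧ (∃ u : V, x.1 = Sum.inl u) ∧ H.Adj x.2 y.2) ∨
    (x.2 = y.2 ∧ (FGraph F G).Adj x.1 y.1)
  symm := by
    refine ⟨?_⟩
    rintro ⟨a, b⟩ ⟨c, d⟩ (⟨h1, h2, h3⟩ | ⟨h1, h2⟩)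
    · exact Or.inl ⟨h1.symm, h1 ▸ h2, h3.symm⟩
    · exact Or.inr ⟨h1.symm, h2.symm⟩
  loopless := by
    refine ⟨?_⟩
    rintro ⟨a, b⟩ (⟨-, -, h⟩ | ⟨-, h⟩)
    · exact H.irrefl h
    · exact (FGraph F G).irrefl h

/-- The path graph `P_n` on `n` vertices. -/
def pathG (n : ℕ) : SimpleGraph (Fin n) where
  Adj i j := (i : ℕ) + 1 = (j : ℕ) ∨ (j : ℕ) + 1 = (i : ℕ)
  symm := by refine ⟨?_⟩; intro i j h; tauto
  loopless := by refine ⟨?_⟩; intro i h; omega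

instance (n : ℕ) : DecidableRel (pathG n).Adj := fun i j =>
  inferInstanceAs (Decidable (_ ∨ _))

/-- The cycle graph `C_n` on `n` vertices (intended for `n ≥ 3`). -/
def cycleG (n : ℕ) : SimpleGraph (Fin n) where
  Adj i j := i ≠ j ∧ (((i : ℕ) + 1) % n = (j : ℕ) ∨ ((j : ℕ) + 1) % n = (i : ℕ))
  symm := by refine ⟨?_⟩; intro i j h; tauto
  loopless := by refine ⟨?_⟩; intro i h; exact h.1 rfl

instance (n : ℕ) : DecidableRel (cycleG n).Adj := fun i j =>
  inferInstanceAs (Decidable (_ ∧ _))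

/-- The star graph `S_n = K_{1,n}` on `n + 1` vertices: vertex `0` is the center. -/
def starG (n : ℕ) : SimpleGraph (Fin (n + 1)) where
  Adj i j := i ≠ j ∧ (i = 0 ∨ j = 0)
  symm := by refine ⟨?_⟩; intro i j h; tauto
  loopless := by refine ⟨?_⟩; intro i h; exact h.1 rfl

instance (n : ℕ) : DecidableRel (starG n).Adj := fun i j =>
  inferInstanceAs (Decidable (_ ∧ _))

/-- The circulant graph `C(ℤ_m, {1, 2})`: vertices `0, …, m - 1`, with `i` adjacent to
`j` iff `i - j ≡ ±1` or `±2 (mod m)`. -/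
def circulantG12 (m : ℕ) : SimpleGraph (Fin m) where
  Adj i j := i ≠ j ∧
    (((i : ℕ) + 1) % m = (j : ℕ) ∨ ((i : ℕ) + 2) % m = (j : ℕ) ∨
     ((j : ℕ) + 1) % m = (i : ℕ) ∨ ((j : ℕ) + 2) % m = (i : ℕ))
  symm := by refine ⟨?_⟩; intro i j h; tauto
  loopless := by refine ⟨?_⟩; intro i h; exact h.1 rfl

/-!
Label the centre `c` of `S_n` by `0`, and both the leaf `ℓᵢ` and the edge vertex `eᵢ = (cℓᵢ)` by
`i`. Then `Q(S_n)` is a complete graph on `c, e₁, …, eₙ` (labels `0, …, n`) with a pendant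
vertex `ℓᵢ` at each `eᵢ`. In the order `c, e₁, ℓ₁, …, eₙ, ℓₙ`, putting the edge `xy` on page
`(label x + label y) mod (n + 1)` is a matching book embedding on `n + 1` pages, and page
`label u` is free at each original vertex `u`: no edge at `u` uses it and no edge on it passes
over `u`.

For `S_n +_Q H`, place one copy of this layout for each vertex of `H`, in the order of a
matching book embedding of `H` on `Δ(H)` pages, reversing the copies for one colour class of
`H`. The edges of `H` at the copies of `u` on page `0` of `H` go to the free page of `u`; the
other `Δ(H) - 1` pages of `H` become new pages. As the two ends of an edge of `H` have oppositely
oriented copies, the copies of that edge nest. This uses `n + Δ(H)` pages, the degree of `(c, w)`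
for `w` of maximum degree in `H`.
-/

open Sum

section MatchingBookEmbedding

variable {V : Type*} {G : SimpleGraph V} {k : ℕ} {f : V → ℕ} {page : Sym2 V → ℕ}

lemma deg_le_of_isMBE (h : IsMBE G k f page) (v : V) : deg G v ≤ k := by
  obtain ⟨-, hlt, -, hmatch⟩ := h
  calc deg G v ≤ (Set.Iio k).ncard :=
        Set.ncard_le_ncard_of_injOn (fun u => page s(v, u)) (fun u hu => hlt v u hu)
          (fun a ha b hb hab => by_contra fun hne => hmatch v a b ha hb hne hab)
          (Set.finite_Iio k)
    _ = k := by rw [← Finset.coe_range, Set.ncard_coe_finset, Finset.card_range]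

lemma mbt_le_of_isMBE (h : IsMBE G k f page) : mbt G ≤ k :=
  Nat.sInf_le ⟨f, page, h⟩

lemma maxDeg_le_mbt_of_isMBE [Fintype V] (h : IsMBE G k f page) : maxDeg G ≤ mbt G := by
  have hne : {k | ∃ f page, IsMBE G k f page}.Nonempty := ⟨k, f, page, h⟩
  obtain ⟨f', page', h'⟩ : ∃ f' page', IsMBE G (mbt G) f' page' := Nat.sInf_mem hne
  exact Finset.sup_le fun v _ => deg_le_of_isMBE h' v

lemma exists_isMBE_mbt (h : 0 < mbt G) : ∃ f page, IsMBE G (mbt G) f page :=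
  Nat.sInf_mem (Nat.nonempty_of_pos_sInf h)

lemma IsMBE.eq_of_le_of_le_of_le (hG : IsMBE G k f page) {u v x y : V} (huv : G.Adj u v)
    (hxy : G.Adj x y) (hp : page s(u, v) = page s(x, y)) (h₁ : f u ≤ f x) (h₂ : f x ≤ f v)
    (h₃ : f v ≤ f y) : u = x ∧ v = y := by
  obtain ⟨hinj, -, hcross, hmatch⟩ := hG
  by_cases hux : u = x
  · subst hux
    exact ⟨rfl, by_contra fun hvy => hmatch u v y huv hxy hvy hp⟩
  have hvx : v ≠ x := by
    rintro rfl
    have hyu : y = u := by_contra fun hyu =>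
      hmatch v y u hxy huv.symm hyu (by rw [Sym2.eq_swap (b := u)]; exact hp.symm)
    subst hyu
    exact huv.ne (hinj (by omega))
  have hvy : v ≠ y := by
    rintro rfl
    exact hux (by_contra fun hne =>
      hmatch v u x huv.symm hxy.symm hne (by rw [Sym2.eq_swap, Sym2.eq_swap (a := v)]; exact hp))
  exact absurd ⟨lt_of_le_of_ne h₁ (hinj.ne hux), lt_of_le_of_ne h₂ (hinj.ne hvx).symm,
    lt_of_le_of_ne h₃ (hinj.ne hvy)⟩ (hcross u v x y huv hxy hp)

lemma IsMBE.reverse {M : ℕ} (hG : IsMBE G k f page) (hM : ∀ v, f v ≤ M) :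
    IsMBE G k (fun v => M - f v) page := by
  obtain ⟨hinj, hlt, hcross, hmatch⟩ := hG
  refine ⟨fun a b hab => hinj ?_, hlt, fun u v x y huv hxy hp h => ?_, hmatch⟩
  · have := hM a; have := hM b; simp only at hab; omega
  · refine hcross y x v u hxy.symm huv.symm
      (by rw [Sym2.eq_swap, Sym2.eq_swap (a := v)]; exact hp.symm) ?_
    have := hM u; have := hM v; have := hM x; have := hM y
    simp only at h
    omega

end MatchingBookEmbedding

section BlockEmbedding

variable {B W : Type*}

def IsFreePageAt (K : SimpleGraph B) (pos : B → ℕ) (page : Sym2 B → ℕ) (b : B) (p : ℕ) : Prop :=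
  (∀ y, K.Adj b y → page s(b, y) ≠ p) ∧
    ∀ x y, K.Adj x y → page s(x, y) = p → ¬(pos x < pos b ∧ pos b < pos y)

def flipPos (M : ℕ) (pos : B → ℕ) (c : W → Fin 2) (z : B × W) : ℕ :=
  if c z.2 = 0 then pos z.1 else M - pos z.1

def blockPos (M : ℕ) (pos : B → ℕ) (c : W → Fin 2) (f : W → ℕ) (z : B × W) : ℕ :=
  (M + 1) * f z.2 + flipPos M pos c z

def hPage (k : ℕ) (nu : B → ℕ) (x : B) (r : ℕ) : ℕ :=
  if r = 0 then nu x else k + r - 1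

open Classical in
noncomputable def sumPage (k : ℕ) (nu : B → ℕ) (kp : Sym2 B → ℕ) (pg : Sym2 W → ℕ) :
    Sym2 (B × W) → ℕ :=
  Sym2.lift ⟨fun a b => if a.1 = b.1 then hPage k nu a.1 (pg s(a.2, b.2)) else kp s(a.1, b.1),
    fun a b => by
      dsimp only
      by_cases h : a.1 = b.1
      · rw [if_pos h, if_pos h.symm, h, Sym2.eq_swap]
      · rw [if_neg h, if_neg (Ne.symm h), Sym2.eq_swap]⟩

variable {M k : ℕ} {pos : B → ℕ} {c : W → Fin 2} {f : W → ℕ} {nu : B → ℕ} {kp : Sym2 B → ℕ}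
  {pg : Sym2 W → ℕ}

lemma IsFreePageAt.reverse {K : SimpleGraph B} {b : B} {p : ℕ} (h : IsFreePageAt K pos kp b p)
    (hM : ∀ x, pos x ≤ M) : IsFreePageAt K (fun x => M - pos x) kp b p := by
  refine ⟨h.1, fun x y hxy hp hlt => h.2 y x hxy.symm (by rwa [Sym2.eq_swap]) ?_⟩
  have := hM x; have := hM y; have := hM b
  simp only at hlt
  omega

lemma flipPos_le (hM : ∀ x, pos x ≤ M) (z : B × W) : flipPos M pos c z ≤ M := by
  unfold flipPos; have := hM z.1; split <;> omega

lemma isMBE_flipPos {K : SimpleGraph B} (hK : IsMBE K k pos kp) (hM : ∀ x, pos x ≤ M) (w : W) :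
    IsMBE K k (fun x => flipPos M pos c (x, w)) kp := by
  by_cases hw : c w = 0
  · simpa only [flipPos, hw, if_true] using hK
  · simpa only [flipPos, hw, if_false] using hK.reverse hM

lemma isFreePageAt_flipPos {K : SimpleGraph B} {b : B} {p : ℕ}
    (h : IsFreePageAt K pos kp b p) (hM : ∀ x, pos x ≤ M) (w : W) :
    IsFreePageAt K (fun x => flipPos M pos c (x, w)) kp b p := by
  by_cases hw : c w = 0
  · simpa only [flipPos, hw, if_true] using h
  · simpa only [flipPos, hw, if_false] using h.reverse hM

lemma blockPos_lt_iff (hM : ∀ x, pos x ≤ M) {a b : B × W} :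
    blockPos M pos c f a < blockPos M pos c f b ↔
      f a.2 < f b.2 ∨ f a.2 = f b.2 ∧ flipPos M pos c a < flipPos M pos c b := by
  have ha := flipPos_le (c := c) hM a
  have hb := flipPos_le (c := c) hM b
  unfold blockPos
  constructor
  · intro h
    rcases lt_trichotomy (f a.2) (f b.2) with hab | hab | hab
    · exact Or.inl hab
    · rw [hab] at h; exact Or.inr ⟨hab, by omega⟩
    · have := Nat.mul_le_mul_left (M + 1) hab; rw [Nat.mul_succ] at this; omega
  · rintro (hab | ⟨hab, h⟩)
    · have := Nat.mul_le_mul_left (M + 1) hab; rw [Nat.mul_succ] at this; omega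
    · rw [hab]; omega

lemma le_of_blockPos_lt (hM : ∀ x, pos x ≤ M) {a b : B × W}
    (h : blockPos M pos c f a < blockPos M pos c f b) : f a.2 ≤ f b.2 := by
  rcases (blockPos_lt_iff hM).mp h with h | ⟨h, -⟩ <;> omega

lemma flipPos_lt_flipPos_of_ne (hM : ∀ x, pos x ≤ M) {x y : B} {w w' : W} (hc : c w ≠ c w')
    (h : flipPos M pos c (x, w) < flipPos M pos c (y, w)) :
    flipPos M pos c (y, w') < flipPos M pos c (x, w') := by
  have := hM x; have := hM y
  simp only [flipPos] at h ⊢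
  split_ifs at h ⊢ <;> omega

lemma flipPos_lt_of_blockPos_lt (hM : ∀ x, pos x ≤ M) {x y : B} {w : W}
    (h : blockPos M pos c f (x, w) < blockPos M pos c f (y, w)) :
    flipPos M pos c (x, w) < flipPos M pos c (y, w) := by
  rcases (blockPos_lt_iff hM).mp h with h | ⟨-, h⟩
  · exact absurd h (lt_irrefl _)
  · exact h

lemma blockPos_injective (hpos : Function.Injective pos) (hf : Function.Injective f)
    (hM : ∀ x, pos x ≤ M) : Function.Injective (blockPos M pos c f) := by
  rintro ⟨x, w⟩ ⟨y, w'⟩ h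
  have h₁ := (blockPos_lt_iff hM).not.mp h.not_lt
  have h₂ := (blockPos_lt_iff hM).not.mp h.not_gt
  obtain rfl : w = w' := hf (by simp only at h₁ h₂; omega)
  have hx := hM x
  have hy := hM y
  obtain rfl : x = y := hpos (by
    by_cases hc : c w = 0 <;>
      simp only [flipPos, hc, if_true, if_false, true_and] at h₁ h₂ <;> omega)
  rfl

lemma sumPage_mk_same (x : B) (w w' : W) :
    sumPage k nu kp pg s((x, w), (x, w')) = hPage k nu x (pg s(w, w')) := by
  simp [sumPage]

lemma sumPage_mk_of_ne {x y : B} (h : x ≠ y) (w w' : W) :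
    sumPage k nu kp pg s((x, w), (y, w')) = kp s(x, y) := by
  simp [sumPage, h]

lemma hPage_lt {d : ℕ} {x : B} {r : ℕ} (hx : nu x < k) (hr : r < d + 1) :
    hPage k nu x r < k + d := by
  unfold hPage; split <;> omega

lemma eq_of_hPage_eq_hPage {x y : B} {r r' : ℕ} (hx : nu x < k) (hy : nu y < k)
    (h : hPage k nu x r = hPage k nu y r') : r = r' := by
  unfold hPage at h; split at h <;> split at h <;> omega

lemma eq_of_hPage_eq_of_lt {x : B} {r p : ℕ} (hp : p < k) (h : hPage k nu x r = p) : nu x = p := by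
  unfold hPage at h; split at h <;> omega

lemma hPage_ne_of_flipPos_lt {K : SimpleGraph B} (hK : ∀ x y, K.Adj x y → kp s(x, y) < k)
    (hM : ∀ x, pos x ≤ M) {b x y : B} (hfree : IsFreePageAt K pos kp b (nu b)) (hxy : K.Adj x y)
    {w : W} (h₁ : flipPos M pos c (x, w) < flipPos M pos c (b, w))
    (h₂ : flipPos M pos c (b, w) < flipPos M pos c (y, w)) (r : ℕ) :
    hPage k nu b r ≠ kp s(x, y) := fun hp =>
  (isFreePageAt_flipPos hfree hM w).2 x y hxy (eq_of_hPage_eq_of_lt (hK x y hxy) hp).symm ⟨h₁, h₂⟩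

end BlockEmbedding

section FSum

variable {V W : Type*} {F : FOp} {G : SimpleGraph V} {H : SimpleGraph W} {M k d : ℕ}
  {pos : V ⊕ G.edgeSet → ℕ} {kp : Sym2 (V ⊕ G.edgeSet) → ℕ} {nu : V ⊕ G.edgeSet → ℕ}
  {c : W → Fin 2} {f : W → ℕ} {pg : Sym2 W → ℕ}

lemma fSum_adj_mk {x y : V ⊕ G.edgeSet} {w w' : W} :
    (FSum F G H).Adj (x, w) (y, w') ↔
      (x = y ∧ (∃ u, x = inl u) ∧ H.Adj w w') ∨ (w = w' ∧ (FGraph F G).Adj x y) :=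
  Iff.rfl

lemma sumPage_lt (hK : ∀ x y, (FGraph F G).Adj x y → kp s(x, y) < k) (hnu : ∀ u, nu (inl u) < k)
    (hH : ∀ w w', H.Adj w w' → pg s(w, w') < d + 1) (a b : (V ⊕ G.edgeSet) × W)
    (hab : (FSum F G H).Adj a b) : sumPage k nu kp pg s(a, b) < k + d := by
  obtain ⟨x, w⟩ := a
  obtain ⟨y, w'⟩ := b
  rcases hab with ⟨rfl, ⟨u, rfl⟩, h⟩ | ⟨rfl, h⟩
  · rw [sumPage_mk_same]; exact hPage_lt (hnu u) (hH _ _ h)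
  · rw [sumPage_mk_of_ne h.ne]; exact (hK _ _ h).trans_le (Nat.le_add_right _ _)

lemma sumPage_ne (hK : IsMBE (FGraph F G) k pos kp) (hnu : ∀ u, nu (inl u) < k)
    (hfree : ∀ u, IsFreePageAt (FGraph F G) pos kp (inl u) (nu (inl u)))
    (hH : IsMBE H (d + 1) f pg) (z z₁ z₂ : (V ⊕ G.edgeSet) × W) (h₁ : (FSum F G H).Adj z z₁)
    (h₂ : (FSum F G H).Adj z z₂) (hne : z₁ ≠ z₂) :
    sumPage k nu kp pg s(z, z₁) ≠ sumPage k nu kp pg s(z, z₂) := by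
  obtain ⟨x, w⟩ := z
  obtain ⟨y₁, w₁⟩ := z₁
  obtain ⟨y₂, w₂⟩ := z₂
  intro hp
  rw [fSum_adj_mk] at h₁ h₂
  rcases h₁ with ⟨rfl, ⟨u, rfl⟩, h₁⟩ | ⟨rfl, h₁⟩ <;> rcases h₂ with ⟨rfl, hu, h₂⟩ | ⟨rfl, h₂⟩
  · rw [sumPage_mk_same, sumPage_mk_same] at hp
    exact hH.2.2.2 w w₁ w₂ h₁ h₂ (fun h => hne (h ▸ rfl)) (eq_of_hPage_eq_hPage (hnu u) (hnu u) hp)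
  · rw [sumPage_mk_same, sumPage_mk_of_ne h₂.ne] at hp
    exact (hfree u).1 y₂ h₂ (eq_of_hPage_eq_of_lt (hK.2.1 _ _ h₂) hp).symm
  · obtain ⟨u, rfl⟩ := hu
    rw [sumPage_mk_of_ne h₁.ne, sumPage_mk_same] at hp
    exact (hfree u).1 y₁ h₁ (eq_of_hPage_eq_of_lt (hK.2.1 _ _ h₁) hp.symm).symm
  · rw [sumPage_mk_of_ne h₁.ne, sumPage_mk_of_ne h₂.ne] at hp
    exact hK.2.2.2 x y₁ y₂ h₁ h₂ (fun h => hne (h ▸ rfl)) hp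

lemma sumPage_not_cross (hK : IsMBE (FGraph F G) k pos kp) (hM : ∀ x, pos x ≤ M)
    (hnu : ∀ u, nu (inl u) < k) (hfree : ∀ u, IsFreePageAt (FGraph F G) pos kp (inl u) (nu (inl u)))
    (hH : IsMBE H (d + 1) f pg) (hc : ∀ w w', H.Adj w w' → c w ≠ c w')
    (a b x y : (V ⊕ G.edgeSet) × W) (hab : (FSum F G H).Adj a b) (hxy : (FSum F G H).Adj x y)
    (hp : sumPage k nu kp pg s(a, b) = sumPage k nu kp pg s(x, y)) :
    ¬(blockPos M pos c f a < blockPos M pos c f x ∧ blockPos M pos c f x < blockPos M pos c f b ∧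
      blockPos M pos c f b < blockPos M pos c f y) := by
  obtain ⟨a, wa⟩ := a
  obtain ⟨b, wb⟩ := b
  obtain ⟨x, wx⟩ := x
  obtain ⟨y, wy⟩ := y
  rintro ⟨h₁, h₂, h₃⟩
  have f₁ := le_of_blockPos_lt hM h₁
  have f₂ := le_of_blockPos_lt hM h₂
  have f₃ := le_of_blockPos_lt hM h₃
  simp only at f₁ f₂ f₃
  rw [fSum_adj_mk] at hab hxy
  rcases hab with ⟨rfl, ⟨u, rfl⟩, hab⟩ | ⟨rfl, hab⟩ <;>
    rcases hxy with ⟨rfl, ⟨u', rfl⟩, hxy⟩ | ⟨rfl, hxy⟩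
  · rw [sumPage_mk_same, sumPage_mk_same] at hp
    obtain ⟨rfl, rfl⟩ := hH.eq_of_le_of_le_of_le hab hxy
      (eq_of_hPage_eq_hPage (hnu u) (hnu u') hp) f₁ f₂ f₃
    exact lt_asymm (flipPos_lt_of_blockPos_lt hM h₃)
      (flipPos_lt_flipPos_of_ne hM (hc _ _ hab) (flipPos_lt_of_blockPos_lt hM h₁))
  · obtain rfl : wx = wb := hH.1 (by omega)
    rw [sumPage_mk_same, sumPage_mk_of_ne hxy.ne] at hp
    exact hPage_ne_of_flipPos_lt hK.2.1 hM (hfree u) hxy (flipPos_lt_of_blockPos_lt hM h₂)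
      (flipPos_lt_of_blockPos_lt hM h₃) _ hp
  · obtain rfl : wx = wa := hH.1 (by omega)
    rw [sumPage_mk_of_ne hab.ne, sumPage_mk_same] at hp
    exact hPage_ne_of_flipPos_lt hK.2.1 hM (hfree u') hab (flipPos_lt_of_blockPos_lt hM h₁)
      (flipPos_lt_of_blockPos_lt hM h₂) _ hp.symm
  · obtain rfl : wx = wa := hH.1 (by omega)
    rw [sumPage_mk_of_ne hab.ne, sumPage_mk_of_ne hxy.ne] at hp
    exact (isMBE_flipPos hK hM wx).2.2.1 a b x y hab hxy hp
      ⟨flipPos_lt_of_blockPos_lt hM h₁, flipPos_lt_of_blockPos_lt hM h₂,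
        flipPos_lt_of_blockPos_lt hM h₃⟩

theorem isMBE_fSum (C : H.Coloring (Fin 2)) (hK : IsMBE (FGraph F G) k pos kp)
    (hM : ∀ x, pos x ≤ M) (hnu : ∀ u, nu (inl u) < k)
    (hfree : ∀ u, IsFreePageAt (FGraph F G) pos kp (inl u) (nu (inl u)))
    (hH : IsMBE H (d + 1) f pg) :
    IsMBE (FSum F G H) (k + d) (blockPos M pos C f) (sumPage k nu kp pg) :=
  ⟨blockPos_injective hK.1 hH.1 hM, sumPage_lt hK.2.1 hnu hH.2.1,
    sumPage_not_cross hK hM hnu hfree hH fun _ _ h => C.valid h, sumPage_ne hK hnu hfree hH⟩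

lemma deg_add_deg_le_deg_fSum [Finite V] [Finite W] (u : V) (w : W) :
    deg H w + deg (FGraph F G) (inl u) ≤ deg (FSum F G H) (inl u, w) := by
  have hsub : (fun w' => (inl u, w')) '' H.neighborSet w ∪
      (fun y => (y, w)) '' (FGraph F G).neighborSet (inl u) ⊆
        (FSum F G H).neighborSet (inl u, w) := by
    rintro _ (⟨w', hw', rfl⟩ | ⟨y, hy, rfl⟩)
    · exact Or.inl ⟨rfl, ⟨u, rfl⟩, hw'⟩
    · exact Or.inr ⟨rfl, hy⟩
  have hdisj : Disjoint ((fun w' => (inl u, w')) '' H.neighborSet w)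
      ((fun y => (y, w)) '' (FGraph F G).neighborSet (inl u)) := by
    rw [Set.disjoint_left]
    rintro _ ⟨w', hw', rfl⟩ ⟨y, -, hy⟩
    exact hw'.ne (congrArg Prod.snd hy)
  calc deg H w + deg (FGraph F G) (inl u)
      = (_ ∪ _ : Set ((V ⊕ G.edgeSet) × W)).ncard := by
        rw [Set.ncard_union_eq hdisj, Set.ncard_image_of_injective _ (Prod.mk_right_injective _),
          Set.ncard_image_of_injective _ (Prod.mk_left_injective _)]
        rfl
    _ ≤ deg (FSum F G H) (inl u, w) := Set.ncard_le_ncard hsub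

lemma maxDeg_add_deg_le_maxDeg_fSum [Fintype V] [Fintype W] [Fintype G.edgeSet] [Nonempty W]
    (u : V) : maxDeg H + deg (FGraph F G) (inl u) ≤ maxDeg (FSum F G H) := by
  obtain ⟨w, -, hw⟩ := Finset.exists_mem_eq_sup Finset.univ Finset.univ_nonempty (deg H)
  calc maxDeg H + deg (FGraph F G) (inl u) = deg H w + deg (FGraph F G) (inl u) := by
        rw [maxDeg, hw]
    _ ≤ deg (FSum F G H) (inl u, w) := deg_add_deg_le_deg_fSum u w
    _ ≤ maxDeg (FSum F G H) := Finset.le_sup (Finset.mem_univ _)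

end FSum

lemma eq_or_eq_add_or_eq_add_of_mod_eq {a b m : ℕ} (ha : a < 2 * m) (hb : b < 2 * m)
    (h : a % m = b % m) : a = b ∨ a = b + m ∨ b = a + m := by
  have hqa : a / m < 2 := Nat.div_lt_of_lt_mul (by omega)
  have hqb : b / m < 2 := Nat.div_lt_of_lt_mul (by omega)
  have hda := Nat.div_add_mod a m
  have hdb := Nat.div_add_mod b m
  interval_cases a / m <;> interval_cases b / m <;> omega

section Star

variable {n : ℕ}

local notation "QS" n => FGraph FOp.Q (starG n)

lemma exists_ne_zero_eq_s_zero (e : (starG n).edgeSet) :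
    ∃ i, i ≠ 0 ∧ (e : Sym2 (Fin (n + 1))) = s(0, i) := by
  obtain ⟨e, he⟩ := e
  induction e with
  | _ a b =>
    rw [SimpleGraph.mem_edgeSet] at he
    obtain ⟨hab, rfl | rfl⟩ := he
    · exact ⟨b, hab.symm, rfl⟩
    · exact ⟨a, hab, Sym2.eq_swap⟩

noncomputable def starLeaf (e : (starG n).edgeSet) : Fin (n + 1) :=
  (exists_ne_zero_eq_s_zero e).choose

lemma starLeaf_ne_zero (e : (starG n).edgeSet) : starLeaf e ≠ 0 :=
  (exists_ne_zero_eq_s_zero e).choose_spec.1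

lemma coe_eq_s_zero_starLeaf (e : (starG n).edgeSet) :
    (e : Sym2 (Fin (n + 1))) = s(0, starLeaf e) :=
  (exists_ne_zero_eq_s_zero e).choose_spec.2

lemma mem_starEdge_iff {e : (starG n).edgeSet} {u : Fin (n + 1)} :
    u ∈ (e : Sym2 (Fin (n + 1))) ↔ u = 0 ∨ u = starLeaf e := by
  rw [coe_eq_s_zero_starLeaf, Sym2.mem_iff]

lemma starLeaf_injective : Function.Injective (starLeaf (n := n)) := fun e e' h =>
  Subtype.ext (by rw [coe_eq_s_zero_starLeaf, coe_eq_s_zero_starLeaf, h])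

lemma one_le_starLeaf (e : (starG n).edgeSet) : 1 ≤ (starLeaf e : ℕ) :=
  Nat.one_le_iff_ne_zero.2 (Fin.val_ne_iff.2 (starLeaf_ne_zero e))

noncomputable def starQLabel : Fin (n + 1) ⊕ (starG n).edgeSet → ℕ
  | inl u => u
  | inr e => starLeaf e

noncomputable def starQPos : Fin (n + 1) ⊕ (starG n).edgeSet → ℕ
  | inl u => 2 * u
  | inr e => 2 * starLeaf e - 1

noncomputable def starQPage : Sym2 (Fin (n + 1) ⊕ (starG n).edgeSet) → ℕ :=
  Sym2.lift ⟨fun x y => (starQLabel x + starQLabel y) % (n + 1), fun x y => by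
    dsimp only; rw [Nat.add_comm (starQLabel x)]⟩

lemma starQPage_mk (x y : Fin (n + 1) ⊕ (starG n).edgeSet) :
    starQPage s(x, y) = (starQLabel x + starQLabel y) % (n + 1) :=
  rfl

lemma starQLabel_le (x : Fin (n + 1) ⊕ (starG n).edgeSet) : starQLabel x ≤ n := by
  cases x with
  | inl u => exact Nat.le_of_lt_succ u.isLt
  | inr e => exact Nat.le_of_lt_succ (starLeaf e).isLt

lemma starQPos_le (x : Fin (n + 1) ⊕ (starG n).edgeSet) : starQPos x ≤ 2 * n := by
  have := starQLabel_le x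
  cases x <;> simp only [starQPos, starQLabel] at * <;> omega

lemma starQPos_injective : Function.Injective (starQPos (n := n)) := by
  rintro (u | e) (v | e') h <;> simp only [starQPos] at h
  · exact congrArg inl (Fin.ext (by omega))
  · have := one_le_starLeaf e'; omega
  · have := one_le_starLeaf e; omega
  · have := one_le_starLeaf e; have := one_le_starLeaf e'
    exact congrArg inr (starLeaf_injective (Fin.ext (by omega)))

lemma starQ_adj_inl_inr {u : Fin (n + 1)} {e : (starG n).edgeSet} :
    (QS n).Adj (inl u) (inr e) ↔ u = 0 ∨ u = starLeaf e :=
  mem_starEdge_iff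

lemma starQ_not_adj_inl_inl {u v : Fin (n + 1)} : ¬(QS n).Adj (inl u) (inl v) :=
  fun h => Bool.false_ne_true h.1

lemma starQ_adj_inr_inr {e e' : (starG n).edgeSet} : (QS n).Adj (inr e) (inr e') ↔ e ≠ e' :=
  ⟨fun h => h.2.1, fun h => ⟨rfl, h, 0, by simp [mem_starEdge_iff]⟩⟩

lemma starQ_adj_cases {x y : Fin (n + 1) ⊕ (starG n).edgeSet} (h : (QS n).Adj x y) :
    (starQPos y = starQPos x + 1 ∨ starQPos x = starQPos y + 1) ∨
      (starQPos x = 2 * starQLabel x - 1 ∧ starQPos y = 2 * starQLabel y - 1 ∧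
        starQLabel x ≠ starQLabel y) := by
  have inl_inr : ∀ (u : Fin (n + 1)) (e : (starG n).edgeSet), (QS n).Adj (inl u) (inr e) →
      starQPos (inl u) = starQPos (inr e) + 1 ∨
        (starQPos (inl u) = 2 * starQLabel (inl u) - 1 ∧
          starQPos (inr e) = 2 * starQLabel (inr e) - 1 ∧
          starQLabel (inl u) ≠ starQLabel (inr e)) := by
    intro u e h
    have := one_le_starLeaf e
    simp only [starQPos, starQLabel]
    rcases starQ_adj_inl_inr.1 h with rfl | rfl <;> simp <;> omega
  rcases x with u | e <;> rcases y with v | e'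
  · exact absurd h starQ_not_adj_inl_inl
  · have := inl_inr u e' h; omega
  · have := inl_inr v e h.symm; omega
  · refine Or.inr ⟨rfl, rfl, fun hl => starQ_adj_inr_inr.1 h (starLeaf_injective (Fin.ext hl))⟩

lemma one_le_starQLabel_of_adj_inl {u : Fin (n + 1)} {y : Fin (n + 1) ⊕ (starG n).edgeSet}
    (h : (QS n).Adj (inl u) y) : 1 ≤ starQLabel y := by
  rcases y with v | e
  · exact absurd h starQ_not_adj_inl_inl
  · exact one_le_starLeaf e

lemma starQLabel_injOn_neighborSet (x : Fin (n + 1) ⊕ (starG n).edgeSet) :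
    Set.InjOn starQLabel ((QS n).neighborSet x) := by
  have mixed : ∀ v e, (QS n).Adj x (inl v) → (QS n).Adj x (inr e) →
      starQLabel (inl v) ≠ starQLabel (inr e) := by
    intro v e hv he hl
    rcases x with u | f
    · exact starQ_not_adj_inl_inl hv
    · rcases starQ_adj_inl_inr.1 hv.symm with rfl | rfl
      · have := one_le_starLeaf e; simp only [starQLabel, Fin.val_zero] at hl; omega
      · exact starQ_adj_inr_inr.1 he (starLeaf_injective (Fin.ext hl))
  rintro (v₁ | e₁) h₁ (v₂ | e₂) h₂ hl
  · exact congrArg inl (Fin.ext hl)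
  · exact absurd hl (mixed v₁ e₂ h₁ h₂)
  · exact absurd hl.symm (mixed v₂ e₁ h₂ h₁)
  · exact congrArg inr (starLeaf_injective (Fin.ext hl))

theorem isMBE_starQ : IsMBE (QS n) (n + 1) starQPos starQPage := by
  refine ⟨starQPos_injective, fun x y _ => Nat.mod_lt _ n.succ_pos, ?_, ?_⟩
  · intro u v x y huv hxy hp hcross
    rw [starQPage_mk, starQPage_mk] at hp
    have := starQLabel_le u; have := starQLabel_le v
    have := starQLabel_le x; have := starQLabel_le y
    rcases eq_or_eq_add_or_eq_add_of_mod_eq (by omega) (by omega) hp with hp | hp | hp <;>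
      rcases starQ_adj_cases huv with huv | huv <;> rcases starQ_adj_cases hxy with hxy | hxy <;>
      omega
  · intro x y₁ y₂ h₁ h₂ hne hp
    rw [starQPage_mk, starQPage_mk] at hp
    have := starQLabel_le x; have := starQLabel_le y₁; have := starQLabel_le y₂
    refine hne (starQLabel_injOn_neighborSet x h₁ h₂ ?_)
    rcases eq_or_eq_add_or_eq_add_of_mod_eq (by omega) (by omega) hp with hp | hp | hp <;> omega

theorem isFreePageAt_starQ (u : Fin (n + 1)) :
    IsFreePageAt (QS n) starQPos starQPage (inl u) (starQLabel (inl u)) := by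
  have hu := starQLabel_le (inl u)
  have hmod : starQLabel (inl u) % (n + 1) = starQLabel (inl u) := Nat.mod_eq_of_lt (by omega)
  have hpos : starQPos (inl u) = 2 * starQLabel (inl u) := rfl
  refine ⟨fun y hy hp => ?_, fun x y hxy hp hlt => ?_⟩
  · rw [starQPage_mk, ← hmod] at hp
    have := one_le_starQLabel_of_adj_inl hy; have := starQLabel_le y
    rcases eq_or_eq_add_or_eq_add_of_mod_eq (by omega) (by omega) hp with hp | hp | hp <;> omega
  · rw [starQPage_mk, ← hmod] at hp
    have := starQLabel_le x; have := starQLabel_le y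
    rcases eq_or_eq_add_or_eq_add_of_mod_eq (by omega) (by omega) hp with hp | hp | hp <;>
      rcases starQ_adj_cases hxy with hxy | hxy <;> omega

theorem isMBE_fSum_Q_starG {W : Type*} {H : SimpleGraph W} (C : H.Coloring (Fin 2)) {d : ℕ}
    {f : W → ℕ} {pg : Sym2 W → ℕ} (hH : IsMBE H (d + 1) f pg) :
    IsMBE (FSum .Q (starG n) H) (n + 1 + d) (blockPos (2 * n) starQPos C f)
      (sumPage (n + 1) starQLabel starQPage pg) :=
  isMBE_fSum C isMBE_starQ starQPos_le (fun _ => Nat.lt_succ_of_le (starQLabel_le _))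
    isFreePageAt_starQ hH

lemma le_deg_starQ_inl_zero : n ≤ deg (QS n) (inl 0) := by
  let edge (i : Fin n) : (starG n).edgeSet := ⟨s(0, i.succ), (Fin.succ_ne_zero i).symm, Or.inl rfl⟩
  have hinj : Set.InjOn (fun i => (inr (edge i) : Fin (n + 1) ⊕ (starG n).edgeSet)) Set.univ :=
    fun i _ j _ h =>
      Fin.succ_injective _ (Sym2.congr_right.1 (congrArg Subtype.val (inr_injective h)))
  calc n = (Set.univ : Set (Fin n)).ncard := by simp
    _ ≤ deg (QS n) (inl 0) :=
      Set.ncard_le_ncard_of_injOn _ (fun i _ => starQ_adj_inl_inr.2 (Or.inl rfl)) hinj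

end Star

theorem star_QSum_dispersable_general (n : ℕ) {W : Type*} [Fintype W]
    (H : SimpleGraph W)
    (hbip : H.Colorable 2) (hdisp : mbt H = maxDeg H) (hΔ : 1 ≤ maxDeg H) :
    mbt (FSum .Q (starG n) H) = maxDeg (FSum .Q (starG n) H) ∧
      maxDeg (FSum .Q (starG n) H) = n + maxDeg H := by
  obtain ⟨f, pg, hH⟩ := exists_isMBE_mbt (hdisp ▸ hΔ : 0 < mbt H)
  obtain ⟨d, hd⟩ := Nat.exists_eq_add_of_le' hΔ
  rw [hdisp, hd] at hH
  have hemb := isMBE_fSum_Q_starG (n := n) hbip.some hH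
  have : Nonempty W := by
    by_contra hW
    simp [maxDeg, Finset.univ_eq_empty_iff.2 (not_nonempty_iff.1 hW)] at hΔ
  have hlower : n + maxDeg H ≤ maxDeg (FSum .Q (starG n) H) :=
    (maxDeg_add_deg_le_maxDeg_fSum 0).trans' (by have := le_deg_starQ_inl_zero (n := n); omega)
  have hupper : mbt (FSum .Q (starG n) H) ≤ n + maxDeg H := by
    have := mbt_le_of_isMBE hemb
    omega
  have := maxDeg_le_mbt_of_isMBE hemb
  omega

/-- For `n ≥ 1` and any finite dispersable bipartite graph `H` with at
least one edge, `S_n +_Q H` is dispersable, with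
`mbt(S_n +_Q H) = Δ(S_n +_Q H) = n + Δ(H)`. -/
theorem star_QSum_dispersable (n : ℕ) (hn : 1 ≤ n) {W : Type*} [Fintype W]
    (H : SimpleGraph W) (hHE : H.edgeSet.Nonempty)
    (hbip : H.Colorable 2) (hdisp : mbt H = maxDeg H) (hΔ : 1 ≤ maxDeg H) :
    mbt (FSum .Q (starG n) H) = maxDeg (FSum .Q (starG n) H) ∧
      maxDeg (FSum .Q (starG n) H) = n + maxDeg H :=
  star_QSum_dispersable_general n H hbip hdisp hΔ
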